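/- Not_POLY example: Let I = fn x=>x and Not_POLY = fn p => p False True (fn f=>fn g=>(g I I I) f). Then (i) Not_POLY is poly-typable by B_HM -> B_HM with respect to True and with respect to False, so that Not_POLY True and Not_POLY False are well-typed closed terms of type B_HM; (ii) Not_POLY True =βηc False and Not_POLY False =βηc True; and (iii) ⊢ Not_POLY : B_HM -> B_HM is not derivable. -/

import Mathlib

/-! Linear λ-calculus preamble -/

/-- Types of the linear λ-calculus: type variables, tensor product, linear implication. -/
inductive Ty : Type
  | tvar : ℕ → Ty
  | tensor : Ty → Ty → Ty
  | arrow : Ty → Ty → Ty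
deriving DecidableEq

/-- Terms of the linear λ-calculus. -/
inductive Tm : Type
  | var : ℕ → Tm
  | app : Tm → Tm → Tm
  | lam : ℕ → Tm → Tm
  | pair : Tm → Tm → Tm
  | letp : ℕ → ℕ → Tm → Tm → Tm
deriving DecidableEq

/-- Free variables of a term. -/
def Tm.fv : Tm → Finset ℕ
  | .var x => {x}
  | .app t s => t.fv ∪ s.fv
  | .lam x t => t.fv \ {x}
  | .pair t s => t.fv ∪ s.fv
  | .letp x y s t => s.fv ∪ (t.fv \ {x, y})

/-- Substitution of a term for a variable. -/
def Tm.subst : Tm → ℕ → Tm → Tm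
  | .var y, x, s => if y = x then s else .var y
  | .app t u, x, s => .app (t.subst x s) (u.subst x s)
  | .lam y t, x, s => if y = x then .lam y t else .lam y (t.subst x s)
  | .pair t u, x, s => .pair (t.subst x s) (u.subst x s)
  | .letp y z u t, x, s =>
      .letp y z (u.subst x s) (if x = y ∨ x = z then t else t.subst x s)

/-- Typing contexts: finite lists of typed variables. -/
abbrev Ctxt := List (ℕ × Ty)

/-- The linear type assignment system. -/
inductive Typed : Ctxt → Tm → Ty → Prop
  | var (x : ℕ) (A : Ty) : Typed [(x, A)] (.var x) A
  | exch (Γ Δ : Ctxt) (x y : ℕ) (A B : Ty) (t : Tm) (C : Ty) :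
      Typed (Γ ++ (x, A) :: (y, B) :: Δ) t C →
      Typed (Γ ++ (y, B) :: (x, A) :: Δ) t C
  | lam (x : ℕ) (A : Ty) (Γ : Ctxt) (t : Tm) (B : Ty) :
      Typed ((x, A) :: Γ) t B → Typed Γ (.lam x t) (.arrow A B)
  | app (Γ Δ : Ctxt) (t s : Tm) (A B : Ty) :
      Typed Γ t (.arrow A B) → Typed Δ s A → Typed (Γ ++ Δ) (.app t s) B
  | pair (Γ Δ : Ctxt) (s t : Tm) (A B : Ty) :
      Typed Γ s A → Typed Δ t B → Typed (Γ ++ Δ) (.pair s t) (.tensor A B)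
  | letp (Γ Δ : Ctxt) (s t : Tm) (x y : ℕ) (A B C : Ty) :
      Typed Γ s (.tensor A B) → Typed ((x, A) :: (y, B) :: Δ) t C →
      Typed (Γ ++ Δ) (.letp x y s t) C

/-- One-hole contexts. -/
inductive Cx : Type
  | hole : Cx
  | appL : Cx → Tm → Cx
  | appR : Tm → Cx → Cx
  | pairL : Cx → Tm → Cx
  | pairR : Tm → Cx → Cx
  | lam : ℕ → Cx → Cx
  | letL : ℕ → ℕ → Cx → Tm → Cx
  | letR : ℕ → ℕ → Tm → Cx → Cx

/-- Plugging a term into a one-hole context. -/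
def Cx.plug : Cx → Tm → Tm
  | .hole, u => u
  | .appL C t, u => .app (C.plug u) t
  | .appR t C, u => .app t (C.plug u)
  | .pairL C t, u => .pair (C.plug u) t
  | .pairR t C, u => .pair t (C.plug u)
  | .lam x C, u => .lam x (C.plug u)
  | .letL x y C t, u => .letp x y (C.plug u) t
  | .letR x y t C, u => .letp x y t (C.plug u)

/-- Variables captured by a context. -/
def Cx.cv : Cx → Finset ℕ
  | .hole => ∅
  | .appL C _ => C.cv
  | .appR _ C => C.cv
  | .pairL C _ => C.cv
  | .pairR _ C => C.cv
  | .lam x C => insert x C.cv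
  | .letL _ _ C _ => C.cv
  | .letR x y _ C => insert x (insert y C.cv)

/-- Free variables of a context. -/
def Cx.fv : Cx → Finset ℕ
  | .hole => ∅
  | .appL C t => C.fv ∪ t.fv
  | .appR t C => t.fv ∪ C.fv
  | .pairL C t => C.fv ∪ t.fv
  | .pairR t C => t.fv ∪ C.fv
  | .lam x C => C.fv \ {x}
  | .letL x y C t => C.fv ∪ (t.fv \ {x, y})
  | .letR x y t C => t.fv ∪ (C.fv \ {x, y})

/-- The base βη-reduction rules. -/
inductive StepBase : Tm → Tm → Prop
  | beta1 (x : ℕ) (t s : Tm) : StepBase (.app (.lam x t) s) (t.subst x s)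
  | beta2 (x y : ℕ) (u v w : Tm) :
      StepBase (.letp x y (.pair u v) w) ((w.subst x u).subst y v)
  | eta1 (x : ℕ) (t : Tm) : x ∉ t.fv → StepBase (.lam x (.app t (.var x))) t
  | eta2 (x y : ℕ) (t : Tm) : x ≠ y → x ∉ t.fv → y ∉ t.fv →
      StepBase (.letp x y t (.pair (.var x) (.var y))) t

/-- Closure of a relation under arbitrary one-hole contexts. -/
def Congr (R : Tm → Tm → Prop) (t u : Tm) : Prop :=
  ∃ (C : Cx) (a b : Tm), R a b ∧ t = C.plug a ∧ u = C.plug b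

/-- One-step βη-reduction (congruent closure of the base rules): →βη. -/
def Step : Tm → Tm → Prop := Congr StepBase

/-- The base commutative conversion rule ↔c. -/
def CommBase (t u : Tm) : Prop :=
  ∃ (C : Cx) (x y : ℕ) (s w : Tm),
    x ∉ C.fv ∧ y ∉ C.fv ∧ (∀ z ∈ C.cv, z ∉ s.fv) ∧
    t = C.plug (.letp x y s w) ∧ u = .letp x y s (C.plug w)

/-- The congruent equivalence relation =c generated by ↔c. -/
def Ceq : Tm → Tm → Prop := Relation.EqvGen (Congr CommBase)

/-- One-step reduction modulo commutative conversion: →βηc. -/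
def StepC (t u : Tm) : Prop := ∃ t' u', Ceq t t' ∧ Step t' u' ∧ Ceq u' u

/-- The equality =βηc : the least congruent equivalence relation containing ↔c and →βηc. -/
def BEqc : Tm → Tm → Prop :=
  Relation.EqvGen (Congr (fun a b => CommBase a b ∨ StepC a b))

/-- Type substitutions and their action on types. -/
def Ty.subst : Ty → (ℕ → Ty) → Ty
  | .tvar a, θ => θ a
  | .tensor A B, θ => .tensor (A.subst θ) (B.subst θ)
  | .arrow A B, θ => .arrow (A.subst θ) (B.subst θ)

/-- Action of a type substitution on a typing context. -/
def CtxtSubst (Γ : Ctxt) (θ : ℕ → Ty) : Ctxt := Γ.map (fun p => (p.1, p.2.subst θ))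

/-- `A` is the principal type of the closed term `t`. -/
def IsPT (t : Tm) (A : Ty) : Prop :=
  Typed [] t A ∧ ∀ A', Typed [] t A' → ∃ θ, A' = A.subst θ

/-- Iterated linear implication `A1->...->An->B`. -/
def arrows (As : List Ty) (B : Ty) : Ty := As.foldr .arrow B

/-- Iterated application `t s1 ⋯ sn`. -/
def apps (t : Tm) (ss : List Tm) : Tm := ss.foldl .app t

/-- `t` is poly-typable by `A1->...->An->B` with respect to closed terms `s1,...,sn`
of types `A1,...,An`. -/
def PolyTypableN (t : Tm) (As : List Ty) (B : Ty) (ss : List Tm) : Prop :=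
  (∃ (As' : List Ty) (B' : Ty), As'.length = As.length ∧ Typed [] t (arrows As' B')) ∧
  List.Forall₂ (fun s A => Typed [] s A) ss As ∧
  ∃ (θ : ℕ → Ty) (PTt : Ty) (As'' : List Ty),
    IsPT t PTt ∧ PTt.subst θ = arrows As'' B ∧
    List.Forall₂ (fun s A'' => ∃ P, IsPT s P ∧ P.subst θ = A'') ss As''


/-- `B_HM = 'a->'a->('a->'a->'a)->'a`. -/
def BHM : Ty :=
  .arrow (.tvar 0)
    (.arrow (.tvar 0)
      (.arrow (.arrow (.tvar 0) (.arrow (.tvar 0) (.tvar 0))) (.tvar 0)))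

/-- `True = fn x=>fn y=>fn z=>z x y`. -/
def TrueHM : Tm :=
  .lam 0 (.lam 1 (.lam 2 (.app (.app (.var 2) (.var 0)) (.var 1))))

/-- `False = fn x=>fn y=>fn z=>z y x`. -/
def FalseHM : Tm :=
  .lam 0 (.lam 1 (.lam 2 (.app (.app (.var 2) (.var 1)) (.var 0))))

/-- `I = fn x=>x`. -/
def ITm : Tm := .lam 0 (.var 0)

/-- `Not_POLY = fn p => p False True (fn f=>fn g=>(g I I I) f)`. -/
def NotPoly : Tm :=
  .lam 5 (.app (.app (.app (.var 5) FalseHM) TrueHM)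
    (.lam 3 (.lam 4
      (.app (.app (.app (.app (.var 4) ITm) ITm) ITm) (.var 3)))))

/-!
Exchange can be absorbed into the context splitting of the binary rules; in that form every
typing of a concrete term inverts rule by rule, which computes the principal types of `True`,
`False` and `Not_POLY`. In every typing of `Not_POLY = fn p => p False True (...)`, the first
argument type of `p` is a type of `False`, hence an arrow, whereas for `p : B_HM` it is the
variable `'a`. Yet, once renamed apart, `PT(Not_POLY)` unifies with `PT(True) -> B_HM` and with
`PT(False) -> B_HM`, which is poly-typability; both applications reach the expected boolean by
weak head reduction.
-/

inductive PermTyped : Ctxt → Tm → Ty → Prop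
  | var (x : ℕ) (A : Ty) : PermTyped [(x, A)] (.var x) A
  | lam {x : ℕ} {A : Ty} {Γ : Ctxt} {t : Tm} {B : Ty} :
      PermTyped ((x, A) :: Γ) t B → PermTyped Γ (.lam x t) (.arrow A B)
  | app {Γ Γ₁ Γ₂ : Ctxt} {t s : Tm} {A B : Ty} : Γ.Perm (Γ₁ ++ Γ₂) →
      PermTyped Γ₁ t (.arrow A B) → PermTyped Γ₂ s A → PermTyped Γ (.app t s) B
  | pair {Γ Γ₁ Γ₂ : Ctxt} {s t : Tm} {A B : Ty} : Γ.Perm (Γ₁ ++ Γ₂) →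
      PermTyped Γ₁ s A → PermTyped Γ₂ t B → PermTyped Γ (.pair s t) (.tensor A B)
  | letp {Γ Γ₁ Γ₂ : Ctxt} {s t : Tm} {x y : ℕ} {A B C : Ty} : Γ.Perm (Γ₁ ++ Γ₂) →
      PermTyped Γ₁ s (.tensor A B) → PermTyped ((x, A) :: (y, B) :: Γ₂) t C →
      PermTyped Γ (.letp x y s t) C

section

variable {Γ Δ : Ctxt} {t s : Tm} {x : ℕ} {A B C : Ty}

namespace PermTyped

theorem perm (h : PermTyped Γ t A) (hp : Γ.Perm Δ) : PermTyped Δ t A := by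
  induction h generalizing Δ with
  | var x A => rw [List.perm_singleton.mp hp.symm]; exact var x A
  | lam _ ih => exact lam (ih (hp.cons _))
  | app hΓ h₁ h₂ => exact app (hp.symm.trans hΓ) h₁ h₂
  | pair hΓ h₁ h₂ => exact pair (hp.symm.trans hΓ) h₁ h₂
  | letp hΓ h₁ h₂ => exact letp (hp.symm.trans hΓ) h₁ h₂

end PermTyped

theorem Typed.perm (h : Typed Γ t A) (hp : Γ.Perm Δ) : Typed Δ t A := by
  suffices ∀ Γ₀, Typed (Γ₀ ++ Γ) t A → Typed (Γ₀ ++ Δ) t A by simpa using this [] h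
  clear h
  induction hp with
  | nil => exact fun _ h => h
  | cons p _ ih => exact fun Γ₀ h => by simpa using ih (Γ₀ ++ [p]) (by simpa using h)
  | swap p q Γ => exact fun Γ₀ h => .exch Γ₀ Γ q.1 p.1 q.2 p.2 t A h
  | trans _ _ ih₁ ih₂ => exact fun Γ₀ h => ih₂ Γ₀ (ih₁ Γ₀ h)

theorem typed_iff_permTyped : Typed Γ t A ↔ PermTyped Γ t A := by
  constructor
  · intro h
    induction h with
    | var x A => exact .var x A
    | exch Γ _ _ _ _ _ _ _ _ ih => exact ih.perm ((List.Perm.swap _ _ _).append_left Γ)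
    | lam _ _ _ _ _ _ ih => exact .lam ih
    | app _ _ _ _ _ _ _ _ ih₁ ih₂ => exact .app (.refl _) ih₁ ih₂
    | pair _ _ _ _ _ _ _ _ ih₁ ih₂ => exact .pair (.refl _) ih₁ ih₂
    | letp _ _ _ _ _ _ _ _ _ _ _ ih₁ ih₂ => exact .letp (.refl _) ih₁ ih₂
  · intro h
    induction h with
    | var x A => exact .var x A
    | lam _ ih => exact .lam _ _ _ _ _ ih
    | app hΓ _ _ ih₁ ih₂ => exact (Typed.app _ _ _ _ _ _ ih₁ ih₂).perm hΓ.symm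
    | pair hΓ _ _ ih₁ ih₂ => exact (Typed.pair _ _ _ _ _ _ ih₁ ih₂).perm hΓ.symm
    | letp hΓ _ _ ih₁ ih₂ => exact (Typed.letp _ _ _ _ _ _ _ _ _ ih₁ ih₂).perm hΓ.symm

theorem Typed.tySubst (h : Typed Γ t A) (θ : ℕ → Ty) :
    Typed (CtxtSubst Γ θ) t (A.subst θ) := by
  induction h with
  | var x A => exact .var x (A.subst θ)
  | exch Γ Δ x y A B t C _ ih =>
      simpa [CtxtSubst] using
        Typed.exch (CtxtSubst Γ θ) (CtxtSubst Δ θ) x y _ _ t _ (by simpa [CtxtSubst] using ih)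
  | lam x A Γ t B _ ih => exact .lam x _ _ t _ ih
  | app Γ Δ t s A B _ _ ih₁ ih₂ =>
      simpa [CtxtSubst] using Typed.app _ _ t s _ _ ih₁ ih₂
  | pair Γ Δ s t A B _ _ ih₁ ih₂ =>
      simpa [CtxtSubst, Ty.subst] using Typed.pair _ _ s t _ _ ih₁ ih₂
  | letp Γ Δ s t x y A B C _ _ ih₁ ih₂ =>
      simpa [CtxtSubst] using
        Typed.letp _ (CtxtSubst Δ θ) s t x y _ _ _ ih₁ (by simpa [CtxtSubst] using ih₂)

-- `Tm.fv` does not determine the context of a closed term: `fn x => x x` has no free variable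
-- but is typable only in a context binding `x`.
def Tm.occs : Tm → List ℕ
  | .var x => [x]
  | .app t s => t.occs ++ s.occs
  | .lam x t => t.occs.erase x
  | .pair t s => t.occs ++ s.occs
  | .letp x y s t => s.occs ++ (t.occs.erase x).erase y

namespace PermTyped

theorem keys_perm_occs (h : PermTyped Γ t A) : (Γ.map Prod.fst).Perm t.occs := by
  induction h with
  | var x A => simp [Tm.occs]
  | lam _ ih => simpa [Tm.occs] using (List.cons_perm_iff_perm_erase.mp ih).2
  | app hΓ _ _ ih₁ ih₂ | pair hΓ _ _ ih₁ ih₂ =>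
      simpa [Tm.occs] using (hΓ.map Prod.fst).trans (by simpa using ih₁.append ih₂)
  | letp hΓ _ _ ih₁ ih₂ =>
      have h₂ := (List.cons_perm_iff_perm_erase.mp (List.cons_perm_iff_perm_erase.mp ih₂).2).2
      simpa [Tm.occs] using (hΓ.map Prod.fst).trans (by simpa using ih₁.append h₂)

theorem eq_nil_of_occs_eq_nil (h : PermTyped Γ t A) (ht : t.occs = []) : Γ = [] := by
  simpa [ht] using h.keys_perm_occs

end PermTyped

theorem permTyped_var_iff : PermTyped Γ (.var x) A ↔ Γ = [(x, A)] := by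
  refine ⟨fun h => ?_, fun h => h ▸ .var x A⟩
  cases h; rfl

theorem permTyped_lam_iff :
    PermTyped Γ (.lam x t) C ↔ ∃ A B, C = .arrow A B ∧ PermTyped ((x, A) :: Γ) t B := by
  refine ⟨fun h => ?_, fun ⟨A, B, hC, h⟩ => hC ▸ .lam h⟩
  cases h with | lam h => exact ⟨_, _, rfl, h⟩

theorem permTyped_app_iff :
    PermTyped Γ (.app t s) B ↔ ∃ Γ₁ Γ₂ A, Γ.Perm (Γ₁ ++ Γ₂) ∧
      PermTyped Γ₁ t (.arrow A B) ∧ PermTyped Γ₂ s A := by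
  refine ⟨fun h => ?_, fun ⟨_, _, _, hΓ, h₁, h₂⟩ => .app hΓ h₁ h₂⟩
  cases h with | app hΓ h₁ h₂ => exact ⟨_, _, _, hΓ, h₁, h₂⟩

theorem permTyped_app_var_iff :
    PermTyped Γ (.app t (.var x)) B ↔
      ∃ X, (x, X) ∈ Γ ∧ PermTyped (Γ.erase (x, X)) t (.arrow X B) := by
  simp only [permTyped_app_iff, permTyped_var_iff]
  constructor
  · rintro ⟨Γ₁, _, X, hΓ, h, rfl⟩
    have hΓ' := List.cons_perm_iff_perm_erase.mp (hΓ.trans (List.perm_append_singleton _ _)).symm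
    exact ⟨X, hΓ'.1, h.perm hΓ'.2⟩
  · rintro ⟨X, hX, h⟩
    exact ⟨_, _, X, (List.perm_cons_erase hX).trans (List.perm_append_singleton _ _).symm, h, rfl⟩

theorem permTyped_app_iff_of_occs_eq_nil (hs : s.occs = []) :
    PermTyped Γ (.app t s) B ↔ ∃ A, PermTyped Γ t (.arrow A B) ∧ PermTyped [] s A := by
  rw [permTyped_app_iff]
  constructor
  · rintro ⟨Γ₁, Γ₂, A, hΓ, h₁, h₂⟩
    obtain rfl := h₂.eq_nil_of_occs_eq_nil hs
    exact ⟨A, h₁.perm (by simpa using hΓ.symm), h₂⟩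
  · rintro ⟨A, h₁, h₂⟩
    exact ⟨Γ, [], A, by simp, h₁, h₂⟩

end

def trueTy (a b c : Ty) : Ty := .arrow a (.arrow b (.arrow (.arrow a (.arrow b c)) c))

def falseTy (a b c : Ty) : Ty := .arrow a (.arrow b (.arrow (.arrow b (.arrow a c)) c))

def NotPolyCont : Tm :=
  .lam 3 (.lam 4 (.app (.app (.app (.app (.var 4) ITm) ITm) ITm) (.var 3)))

def notPolyContTy (f c₁ c₂ c₃ r : Ty) : Ty :=
  .arrow f (.arrow (.arrow (.arrow c₁ c₁) (.arrow (.arrow c₂ c₂)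
    (.arrow (.arrow c₃ c₃) (.arrow f r)))) r)

def notPolyTy (f t k r : Ty) : Ty := .arrow (.arrow f (.arrow t (.arrow k r))) r

theorem permTyped_ITm_iff {Γ : Ctxt} {C : Ty} :
    PermTyped Γ ITm C ↔ Γ = [] ∧ ∃ X, C = .arrow X X := by
  simp [ITm, permTyped_lam_iff, permTyped_var_iff, and_comm]

theorem permTyped_trueHM_iff {C : Ty} :
    PermTyped [] TrueHM C ↔ ∃ a b c, C = trueTy a b c := by
  simp [TrueHM, trueTy, permTyped_lam_iff, permTyped_app_var_iff, permTyped_var_iff]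

theorem permTyped_falseHM_iff {C : Ty} :
    PermTyped [] FalseHM C ↔ ∃ a b c, C = falseTy a b c := by
  simp [FalseHM, falseTy, permTyped_lam_iff, permTyped_app_var_iff, permTyped_var_iff]

theorem permTyped_notPolyCont_iff {C : Ty} :
    PermTyped [] NotPolyCont C ↔ ∃ f c₁ c₂ c₃ r, C = notPolyContTy f c₁ c₂ c₃ r := by
  simp only [NotPolyCont, ITm, permTyped_lam_iff, permTyped_app_var_iff, List.mem_cons,
    Prod.mk.injEq, Nat.reduceEqDiff, false_and, true_and, List.not_mem_nil, or_false, false_or,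
    beq_iff_eq, Nat.succ_ne_self, not_false_eq_true, List.erase_cons_tail, Tm.occs,
    List.erase_cons_head, permTyped_app_iff_of_occs_eq_nil, permTyped_var_iff, List.cons.injEq,
    List.erase_eq_nil_iff, List.cons_ne_self, and_true, exists_eq_right', existsAndEq,
    exists_and_right, exists_eq_left, notPolyContTy]
  exact ⟨fun ⟨f, r, c₃, c₂, c₁, h⟩ => ⟨f, c₁, c₂, c₃, r, h⟩,
    fun ⟨f, c₁, c₂, c₃, r, h⟩ => ⟨f, r, c₃, c₂, c₁, h⟩⟩

theorem permTyped_notPoly_iff {C : Ty} :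
    PermTyped [] NotPoly C ↔ ∃ f t k r, C = notPolyTy f t k r ∧
      PermTyped [] FalseHM f ∧ PermTyped [] TrueHM t ∧ PermTyped [] NotPolyCont k := by
  change PermTyped [] (.lam 5 (.app (.app (.app (.var 5) FalseHM) TrueHM) NotPolyCont)) C ↔ _
  have hF : FalseHM.occs = [] := rfl
  have hT : TrueHM.occs = [] := rfl
  have hK : NotPolyCont.occs = [] := rfl
  simp only [permTyped_lam_iff, hK, permTyped_app_iff_of_occs_eq_nil, hT, hF, permTyped_var_iff,
    List.cons.injEq, Prod.mk.injEq, true_and, and_true, existsAndEq, notPolyTy, exists_and_right]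
  exact ⟨fun ⟨r, k, t, f, hC, ⟨hf, ht⟩, hk⟩ => ⟨f, t, k, ⟨r, hC⟩, hf, ht, hk⟩,
    fun ⟨f, t, k, ⟨r, hC⟩, hf, ht, hk⟩ => ⟨r, k, t, f, hC, ⟨hf, ht⟩, hk⟩⟩

theorem beqc_plug_of_stepBase (C : Cx) {a b : Tm} (h : StepBase a b) :
    BEqc (C.plug a) (C.plug b) :=
  .rel _ _ ⟨C, a, b, .inr ⟨a, b, .refl a, ⟨.hole, a, b, h, rfl, rfl⟩, .refl b⟩, rfl, rfl⟩

def Cx.appLs : Cx → List Tm → Cx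
  | C, [] => C
  | C, s :: ss => (Cx.appL C s).appLs ss

theorem Cx.plug_appLs (C : Cx) (ss : List Tm) (u : Tm) :
    (C.appLs ss).plug u = apps (C.plug u) ss := by
  induction ss generalizing C with
  | nil => rfl
  | cons s ss ih => exact ih (.appL C s)

theorem beqc_apps_beta (x : ℕ) (t s : Tm) (ss : List Tm) :
    BEqc (apps (.app (.lam x t) s) ss) (apps (t.subst x s) ss) := by
  simpa [Cx.plug_appLs, Cx.plug] using beqc_plug_of_stepBase (Cx.hole.appLs ss) (.beta1 x t s)

def headReduce : ℕ → Tm → List Tm → Tm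
  | n + 1, .app t s, ss => headReduce n t (s :: ss)
  | n + 1, .lam x t, s :: ss => headReduce n (t.subst x s) ss
  | _, t, ss => apps t ss

theorem beqc_headReduce (n : ℕ) (t : Tm) (ss : List Tm) :
    BEqc (apps t ss) (headReduce n t ss) := by
  induction n generalizing t ss with
  | zero => exact .refl _
  | succ n ih =>
    match t, ss with
    | .app t s, ss => exact ih t (s :: ss)
    | .lam x t, s :: ss => exact (beqc_apps_beta x t s ss).trans _ _ _ (ih _ ss)
    | .var _, _ | .pair _ _, _ | .letp _ _ _ _, _ | .lam _ _, [] => exact .refl _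

theorem beqc_notPoly_trueHM : BEqc (.app NotPoly TrueHM) FalseHM :=
  beqc_headReduce 24 NotPoly [TrueHM]

theorem beqc_notPoly_falseHM : BEqc (.app NotPoly FalseHM) TrueHM :=
  beqc_headReduce 24 NotPoly [FalseHM]

theorem IsPT.typed_of_subst_eq {t : Tm} {P A : Ty} {θ : ℕ → Ty} (ht : IsPT t P)
    (hθ : P.subst θ = A) : Typed [] t A :=
  hθ ▸ ht.1.tySubst θ

theorem polyTypableN_of_isPT {t s : Tm} {P Q A B : Ty} {θ : ℕ → Ty} (ht : IsPT t P)
    (hs : IsPT s Q) (hθ : P.subst θ = .arrow (Q.subst θ) B) (hsA : Typed [] s A) :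
    PolyTypableN t [A] B [s] :=
  ⟨⟨[Q.subst θ], B, rfl, ht.typed_of_subst_eq hθ⟩, .cons hsA .nil,
    θ, P, [Q.subst θ], ht, hθ, .cons ⟨Q, hs, rfl⟩ .nil⟩

theorem typed_app_of_isPT {t s : Tm} {P Q B : Ty} {θ : ℕ → Ty} (ht : IsPT t P)
    (hs : IsPT s Q) (hθ : P.subst θ = .arrow (Q.subst θ) B) : Typed [] (.app t s) B :=
  .app [] [] t s _ B (ht.typed_of_subst_eq hθ) (hs.1.tySubst θ)

-- The variables 12, 13, 14 do not occur in `ptNotPoly`, so that a single substitution can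
-- instantiate `ptNotPoly` and `ptTrue` (or `ptFalse`) independently.
def ptTrue : Ty := trueTy (.tvar 12) (.tvar 13) (.tvar 14)

def ptFalse : Ty := falseTy (.tvar 12) (.tvar 13) (.tvar 14)

def ptNotPoly : Ty :=
  notPolyTy (falseTy (.tvar 0) (.tvar 1) (.tvar 2)) (trueTy (.tvar 3) (.tvar 4) (.tvar 5))
    (notPolyContTy (.tvar 6) (.tvar 7) (.tvar 8) (.tvar 9) (.tvar 10)) (.tvar 11)

theorem isPT_trueHM : IsPT TrueHM ptTrue := by
  refine ⟨typed_iff_permTyped.2 (permTyped_trueHM_iff.2 ⟨_, _, _, rfl⟩), fun A h => ?_⟩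
  obtain ⟨a, b, c, rfl⟩ := permTyped_trueHM_iff.1 (typed_iff_permTyped.1 h)
  exact ⟨fun n => if n = 12 then a else if n = 13 then b else c, rfl⟩

theorem isPT_falseHM : IsPT FalseHM ptFalse := by
  refine ⟨typed_iff_permTyped.2 (permTyped_falseHM_iff.2 ⟨_, _, _, rfl⟩), fun A h => ?_⟩
  obtain ⟨a, b, c, rfl⟩ := permTyped_falseHM_iff.1 (typed_iff_permTyped.1 h)
  exact ⟨fun n => if n = 12 then a else if n = 13 then b else c, rfl⟩

theorem isPT_notPoly : IsPT NotPoly ptNotPoly := by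
  refine ⟨typed_iff_permTyped.2 (permTyped_notPoly_iff.2 ⟨_, _, _, _, rfl,
    permTyped_falseHM_iff.2 ⟨_, _, _, rfl⟩, permTyped_trueHM_iff.2 ⟨_, _, _, rfl⟩,
    permTyped_notPolyCont_iff.2 ⟨_, _, _, _, _, rfl⟩⟩), fun A h => ?_⟩
  obtain ⟨f, t, k, r, rfl, hf, ht, hk⟩ := permTyped_notPoly_iff.1 (typed_iff_permTyped.1 h)
  obtain ⟨a₀, a₁, a₂, rfl⟩ := permTyped_falseHM_iff.1 hf
  obtain ⟨a₃, a₄, a₅, rfl⟩ := permTyped_trueHM_iff.1 ht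
  obtain ⟨a₆, a₇, a₈, a₉, a₁₀, rfl⟩ := permTyped_notPolyCont_iff.1 hk
  exact ⟨fun n => [a₀, a₁, a₂, a₃, a₄, a₅, a₆, a₇, a₈, a₉, a₁₀].getD n r, rfl⟩

def endoBHM : Ty := .arrow BHM BHM

-- Solutions of the unification problems `ptNotPoly = ptTrue -> BHM` and
-- `ptNotPoly = ptFalse -> BHM`; the variables they leave free are sent to `'a`.
def substTrue : ℕ → Ty :=
  fun n => [.tvar 0, .tvar 0, .tvar 0, .arrow endoBHM endoBHM, endoBHM, endoBHM,
    BHM, endoBHM, BHM, .arrow endoBHM endoBHM, BHM, BHM,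
    BHM, trueTy (.arrow endoBHM endoBHM) endoBHM endoBHM, BHM].getD n (.tvar n)

def substFalse : ℕ → Ty :=
  fun n => [endoBHM, .arrow endoBHM endoBHM, endoBHM, .tvar 0, .tvar 0, .tvar 0,
    BHM, BHM, endoBHM, .arrow endoBHM endoBHM, BHM, BHM,
    falseTy endoBHM (.arrow endoBHM endoBHM) endoBHM, BHM, BHM].getD n (.tvar n)

theorem ptNotPoly_subst_substTrue :
    ptNotPoly.subst substTrue = .arrow (ptTrue.subst substTrue) BHM := rfl

theorem ptNotPoly_subst_substFalse :
    ptNotPoly.subst substFalse = .arrow (ptFalse.subst substFalse) BHM := rfl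

theorem not_typed_notPoly_bhm : ¬ Typed [] NotPoly (.arrow BHM BHM) := by
  intro h
  obtain ⟨θ, hθ⟩ := isPT_notPoly.2 _ h
  simp [ptNotPoly, notPolyTy, falseTy, BHM, Ty.subst] at hθ

/-- **Not_POLY example.** `Not_POLY` is poly-typable by `B_HM -> B_HM` with respect to
`True` and with respect to `False` (so `Not_POLY True` and `Not_POLY False` are
well-typed closed terms of type `B_HM`), `Not_POLY True =βηc False`,
`Not_POLY False =βηc True`, and yet `⊢ Not_POLY : B_HM -> B_HM` is not derivable. -/
theorem notPoly_example :
    (PolyTypableN NotPoly [BHM] BHM [TrueHM] ∧ PolyTypableN NotPoly [BHM] BHM [FalseHM] ∧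
      Typed [] (.app NotPoly TrueHM) BHM ∧ Typed [] (.app NotPoly FalseHM) BHM) ∧
    (BEqc (.app NotPoly TrueHM) FalseHM ∧ BEqc (.app NotPoly FalseHM) TrueHM) ∧
    ¬ Typed [] NotPoly (Ty.arrow BHM BHM) :=
  ⟨⟨polyTypableN_of_isPT isPT_notPoly isPT_trueHM ptNotPoly_subst_substTrue
      (isPT_trueHM.typed_of_subst_eq (θ := fun _ => .tvar 0) rfl),
    polyTypableN_of_isPT isPT_notPoly isPT_falseHM ptNotPoly_subst_substFalse
      (isPT_falseHM.typed_of_subst_eq (θ := fun _ => .tvar 0) rfl),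
    typed_app_of_isPT isPT_notPoly isPT_trueHM ptNotPoly_subst_substTrue,
    typed_app_of_isPT isPT_notPoly isPT_falseHM ptNotPoly_subst_substFalse⟩,
   ⟨beqc_notPoly_trueHM, beqc_notPoly_falseHM⟩, not_typed_notPoly_bhm⟩
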